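/- With h̄₁ and h̄₂ as in the four-point example (the entropy functions of Q^ν relative to P computed on the fine and coarse partitions respectively), and h₁(ν) = h̄₁(ν) - inf h̄₁, h₂(ν) = h̄₂(ν) - inf h̄₂, there exists ν ∈ (-1/6, 1/3) such that h₁(ν) ≠ h₂(ν). -/

import Mathlib

/-!
Merging the cells `ω₃, ω₄` loses exactly `t · log (9/8)` of relative entropy, where
`t = Q^ν(ω₃) = Q^ν(ω₄) = (1/3 - ν)/2`. Hence `h̄₂ - h̄₁` is a non-constant affine function of `ν`,
while `h₁ = h₂` on the whole interval would force it to be constant.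
-/

noncomputable def Pvec : Fin 4 → ℝ := ![1/3, 1/3, 1/9, 2/9]

noncomputable def Qvec (ν : ℝ) : Fin 4 → ℝ :=
  ![1/3 - ν, 1/3 + 2*ν, (1/3 - ν)/2, (1/3 - ν)/2]

/-- Fine-partition entropy h̄₂(ν) = Σᵢ Q^ν(ωᵢ)·ln(Q^ν(ωᵢ)/P(ωᵢ)). -/
noncomputable def h2bar (ν : ℝ) : ℝ := ∑ i, Qvec ν i * Real.log (Qvec ν i / Pvec i)

/-- Coarse-partition entropy h̄₁. -/
noncomputable def h1bar (ν : ℝ) : ℝ :=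
  Qvec ν 0 * Real.log (Qvec ν 0 / Pvec 0) + Qvec ν 1 * Real.log (Qvec ν 1 / Pvec 1)
    + (Qvec ν 2 + Qvec ν 3) * Real.log ((Qvec ν 2 + Qvec ν 3) / (Pvec 2 + Pvec 3))

open Real

lemma exists_sub_ne_sub_of_sub_ne_sub {α : Type*} {f g : α → ℝ} {S : Set α} {x y : α}
    (hx : x ∈ S) (hy : y ∈ S) (hxy : g x - f x ≠ g y - f y) (a b : ℝ) :
    ∃ z ∈ S, f z - a ≠ g z - b := by
  by_contra! h
  exact hxy (by linarith [h x hx, h y hy])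

lemma mul_log_div_add_mul_log_div_sub_mul_log_div_add {t p q : ℝ}
    (ht : 0 < t) (hp : 0 < p) (hq : 0 < q) :
    t * log (t / p) + t * log (t / q) - (t + t) * log ((t + t) / (p + q))
      = t * log ((p + q) ^ 2 / (4 * p * q)) := by
  have hpq : 0 < p + q := by positivity
  rw [log_div ht.ne' hp.ne', log_div ht.ne' hq.ne', ← two_mul,
    log_div (by positivity) hpq.ne', log_mul two_ne_zero ht.ne',
    log_div (by positivity) (by positivity), log_pow, log_mul (by positivity) hq.ne',
    log_mul (by positivity) hp.ne', show (4 : ℝ) = 2 ^ 2 by norm_num, log_pow]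
  push_cast
  ring

lemma h2bar_sub_h1bar {ν : ℝ} (hν : ν < 1/3) :
    h2bar ν - h1bar ν = (1/3 - ν) / 2 * log (9/8) := by
  have h := mul_log_div_add_mul_log_div_sub_mul_log_div_add
    (t := (1/3 - ν) / 2) (p := 1/9) (q := 2/9) (by linarith) (by norm_num) (by norm_num)
  rw [show ((1/9 + 2/9 : ℝ)) ^ 2 / (4 * (1/9) * (2/9)) = 9/8 by norm_num] at h
  simp only [h2bar, h1bar, Fin.sum_univ_four, Qvec, Pvec, Matrix.cons_val_zero,
    Matrix.cons_val_one, Matrix.cons_val_two, Matrix.cons_val_three, Matrix.head_cons,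
    Matrix.tail_cons]
  linarith

/-- The normalized penalty functions h₁ = h̄₁ - inf h̄₁ and h₂ = h̄₂ - inf h̄₂ differ
somewhere on (-1/6, 1/3). -/
theorem stmt6 : ∃ ν ∈ Set.Ioo (-(1:ℝ)/6) (1/3),
    h1bar ν - sInf (h1bar '' Set.Ioo (-(1:ℝ)/6) (1/3)) ≠
      h2bar ν - sInf (h2bar '' Set.Ioo (-(1:ℝ)/6) (1/3)) := by
  refine exists_sub_ne_sub_of_sub_ne_sub (x := 0) (y := 1/6)
    (by norm_num) (by norm_num) ?_ _ _
  rw [h2bar_sub_h1bar (by norm_num), h2bar_sub_h1bar (by norm_num)]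
  have hlog : 0 < log (9/8 : ℝ) := log_pos (by norm_num)
  intro h
  linarith
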